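/- arXiv:1908.08347 — 3 statements merged into one kernel-verified Lean document; each statement's English description precedes it below -/
import Mathlib

section
/- Let F be the family of subsets of {1,…,n} of size exactly k/2 (k even), and for each set S of size at most k/2 let f̂_S = Σ_{A ∈ F, S ⊆ A} f_A, where (f_A) is any family of elements of a commutative ring indexed by F. Then Σ_{A ∈ F} Σ_{B ∈ F, A ∩ B = ∅} f_A · f_B = Σ_{S : |S| ≤ k/2} (-1)^{|S|} (f̂_S)². -/
open Finset

/-!
Expanding `(f̂_S)²` as a double sum over pairs `(A, B)` with `S ⊆ A ∩ B` and exchanging the order of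
summation, the coefficient of `f_A f_B` becomes `Σ_{S ⊆ A ∩ B} (-1)^{|S|}`, which is `1` if `A ∩ B = ∅`
and `0` otherwise. Sets `S` with `|S| > k/2` lie in no `A` of size `k/2`, so they contribute nothing.
-/

namespace Finset

variable {α R : Type*} [DecidableEq α]

theorem sum_powerset_neg_one_pow_card_eq_ite [Ring R] (x : Finset α) :
    ∑ S ∈ x.powerset, (-1 : R) ^ #S = if x = ∅ then 1 else 0 := by
  exact_mod_cast congrArg (Int.cast : ℤ → R) sum_powerset_neg_one_pow_card

theorem sq_sum_filter_superset [CommSemiring R] (P : Finset (Finset α)) (f : Finset α → R)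
    (S : Finset α) :
    (∑ A ∈ P with S ⊆ A, f A) ^ 2 =
      ∑ A ∈ P, ∑ B ∈ P, if S ⊆ A ∩ B then f A * f B else 0 := by
  rw [sq, sum_filter, sum_mul_sum]
  refine sum_congr rfl fun A _ => sum_congr rfl fun B _ => ?_
  simp only [subset_inter_iff, ite_and]
  split_ifs <;> simp

theorem sum_neg_one_pow_card_mul_sq_sum_filter_superset [Fintype α] [CommRing R]
    (P : Finset (Finset α)) (f : Finset α → R) :
    ∑ S, (-1 : R) ^ #S * (∑ A ∈ P with S ⊆ A, f A) ^ 2 =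
      ∑ A ∈ P, ∑ B ∈ P with A ∩ B = ∅, f A * f B := by
  calc ∑ S, (-1 : R) ^ #S * (∑ A ∈ P with S ⊆ A, f A) ^ 2
      = ∑ A ∈ P, ∑ B ∈ P, ∑ S, if S ⊆ A ∩ B then (-1 : R) ^ #S * (f A * f B) else 0 := by
        simp_rw [sq_sum_filter_superset, mul_sum, mul_ite, mul_zero]
        rw [sum_comm]
        exact sum_congr rfl fun A _ => sum_comm
    _ = ∑ A ∈ P, ∑ B ∈ P, (∑ S ∈ (A ∩ B).powerset, (-1 : R) ^ #S) * (f A * f B) := by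
        simp_rw [← filter_subset_univ, sum_filter, sum_mul, ite_mul, zero_mul]
    _ = ∑ A ∈ P, ∑ B ∈ P with A ∩ B = ∅, f A * f B := by
        simp_rw [sum_powerset_neg_one_pow_card_eq_ite, ite_mul, one_mul, zero_mul, sum_filter]

theorem filter_superset_powersetCard_eq_empty {m : ℕ} {S : Finset α} (hS : m < #S)
    (s : Finset α) : {A ∈ powersetCard m s | S ⊆ A} = ∅ :=
  filter_eq_empty_iff.mpr fun _ hA hSA =>
    hS.not_ge ((mem_powersetCard.mp hA).2 ▸ card_le_card hSA)

end Finset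

theorem disjoint_sum_inclusion_exclusion_general (n k : ℕ)
    (R : Type*) [CommRing R] (f : Finset (Fin n) → R) :
    ∑ A ∈ (univ : Finset (Fin n)).powersetCard (k / 2),
      ∑ B ∈ ((univ : Finset (Fin n)).powersetCard (k / 2)).filter (fun B => A ∩ B = ∅),
        f A * f B =
    ∑ S ∈ (univ : Finset (Fin n)).powerset.filter (fun S => S.card ≤ k / 2),
      (-1 : R) ^ S.card *
        (∑ A ∈ ((univ : Finset (Fin n)).powersetCard (k / 2)).filter (fun A => S ⊆ A), f A) ^ 2 := by
  rw [← sum_neg_one_pow_card_mul_sq_sum_filter_superset, powerset_univ]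
  refine (sum_subset (filter_subset _ _) fun S _ hS => ?_).symm
  have hlarge : k / 2 < #S := by simpa using hS
  rw [filter_superset_powersetCard_eq_empty hlarge, sum_empty, zero_pow two_ne_zero, mul_zero]

/-- Inclusion–exclusion identity for the disjoint-sum trick: with `F` the family of
`k/2`-subsets of `[n]` and `f̂_S = Σ_{A ∈ F, S ⊆ A} f_A`,
`Σ_{A,B ∈ F, A ∩ B = ∅} f_A f_B = Σ_{|S| ≤ k/2} (-1)^{|S|} (f̂_S)²`. -/
theorem disjoint_sum_inclusion_exclusion (n k : ℕ) (hk : Even k) (hkn : k / 2 ≤ n)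
    (R : Type*) [CommRing R] (f : Finset (Fin n) → R) :
    ∑ A ∈ (univ : Finset (Fin n)).powersetCard (k / 2),
      ∑ B ∈ ((univ : Finset (Fin n)).powersetCard (k / 2)).filter (fun B => A ∩ B = ∅),
        f A * f B =
    ∑ S ∈ (univ : Finset (Fin n)).powerset.filter (fun S => S.card ≤ k / 2),
      (-1 : R) ^ S.card *
        (∑ A ∈ ((univ : Finset (Fin n)).powersetCard (k / 2)).filter (fun A => S ⊆ A), f A) ^ 2 :=
  disjoint_sum_inclusion_exclusion_general n k R f
end

section
/- Let S ⊆ I_{2k,2n} be the set of injections f : [2k] → [2n] for which there exists an injection g : [k] → [n] with f(2i-1) = g(i) and f(2i) = n + g(i) for all i ∈ [k]. Then the map g ↦ f_g is a bijection from I_{k,n} to S, and every f ∈ S has sign sgn(f) = (-1)^{k(k-1)/2}. -/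
/-!
Identify position `2 * i + b` of `Fin (2 * k)` with `(i, b)` and value `x + n * b` of `Fin (2 * n)`
with `(b, x)`; then `f_g (i, b) = (b, g i)`, so `f_g` is injective and determined by `g`.
Among the four pairs of positions between blocks `i < j`, `(2i+1, 2j)` is always an inversion
(`n + g i > g j`), `(2i, 2j)` and `(2i+1, 2j+1)` are inversions exactly when `g j < g i`, and
`(2i, 2j+1)` never is. Hence `inv f_g = C(k, 2) + 2 * inv g`.
-/

open Finset

/-- `fgRel g f` says `f` is the interleaved injection `f_g : [2k] → [2n]` with
`f(2i-1) = g(i)` and `f(2i) = n + g(i)` (1-based; here 0-based indexing). -/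
def fgRel (k n : ℕ) (g : Fin k ↪ Fin n) (f : Fin (2 * k) → Fin (2 * n)) : Prop :=
  ∀ i : Fin k,
    f ⟨2 * (i : ℕ), by have := i.isLt; omega⟩ =
      ⟨(g i : ℕ), by have := (g i).isLt; omega⟩ ∧
    f ⟨2 * (i : ℕ) + 1, by have := i.isLt; omega⟩ =
      ⟨n + (g i : ℕ), by have := (g i).isLt; omega⟩

def inversions {α β : Type*} [Fintype α] [LinearOrder α] [LinearOrder β] (f : α → β) :
    Finset (α × α) :=
  {p | p.1 < p.2 ∧ f p.2 < f p.1}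

namespace Fin

def interleaveEquiv (k : ℕ) : Fin k × Fin 2 ≃ Fin (2 * k) :=
  finProdFinEquiv.trans (finCongr (Nat.mul_comm k 2))

@[simp]
lemma val_interleaveEquiv {k : ℕ} (p : Fin k × Fin 2) :
    (interleaveEquiv k p : ℕ) = 2 * p.1 + p.2 := by
  simp [interleaveEquiv]; ring

variable {k n : ℕ}

def interleave (g : Fin k → Fin n) : Fin (2 * k) → Fin (2 * n) :=
  finProdFinEquiv ∘ Prod.map id g ∘ Prod.swap ∘ (interleaveEquiv k).symm

lemma interleave_interleaveEquiv (g : Fin k → Fin n) (i : Fin k) (b : Fin 2) :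
    interleave g (interleaveEquiv k (i, b)) = finProdFinEquiv (b, g i) := by
  simp [interleave]

lemma _root_.Function.Injective.interleave {g : Fin k → Fin n} (hg : Function.Injective g) :
    Function.Injective (interleave g) :=
  finProdFinEquiv.injective.comp <| (Function.injective_id.prodMap hg).comp <|
    Prod.swap_injective.comp (interleaveEquiv k).symm.injective

lemma interleave_injective : Function.Injective (interleave : (Fin k → Fin n) → _) := by
  intro g g' h
  funext i
  simpa [interleave_interleaveEquiv] using congr_fun h (interleaveEquiv k (i, 0))

lemma card_inversions_interleave_blocks (g : Fin k → Fin n) (i j : Fin k) :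
    #{b : Fin 2 × Fin 2 |
        (interleaveEquiv k (i, b.1), interleaveEquiv k (j, b.2)) ∈ inversions (interleave g)} =
      (if i < j then 1 else 0) + 2 * if (i, j) ∈ inversions g then 1 else 0 := by
  rw [card_filter, Fintype.sum_prod_type]
  simp only [Fin.sum_univ_two, inversions, mem_filter_univ, interleave_interleaveEquiv,
    Fin.lt_def, val_interleaveEquiv, finProdFinEquiv_apply_val]
  have := (g i).isLt
  have := (g j).isLt
  split_ifs <;> omega

lemma card_inversions_interleave (g : Fin k → Fin n) :
    #(inversions (interleave g)) = k.choose 2 + 2 * #(inversions g) := by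
  let E := (Equiv.prodProdProdComm (Fin k) (Fin k) (Fin 2) (Fin 2)).trans
    ((interleaveEquiv k).prodCongr (interleaveEquiv k))
  have hpairs : #{ij : Fin k × Fin k | ij.1 < ij.2} = k.choose 2 := by
    simpa using card_product_filter_lt (s := (univ : Finset (Fin k)))
  calc #(inversions (interleave g))
      = ∑ p : Fin (2 * k) × Fin (2 * k), if p ∈ inversions (interleave g) then 1 else 0 := by
        simp
    _ = ∑ ij : Fin k × Fin k, #{b : Fin 2 × Fin 2 |
          (interleaveEquiv k (ij.1, b.1), interleaveEquiv k (ij.2, b.2)) ∈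
            inversions (interleave g)} := by
        rw [← Fintype.sum_equiv E _ _ fun _ => rfl, Fintype.sum_prod_type]
        simp only [card_filter]
        rfl
    _ = k.choose 2 + 2 * #(inversions g) := by
        simp only [card_inversions_interleave_blocks, sum_add_distrib, ← mul_sum, sum_boole,
          hpairs]
        simp

end Fin

open Fin

lemma fgRel_iff (k n : ℕ) (g : Fin k ↪ Fin n) (f : Fin (2 * k) → Fin (2 * n)) :
    fgRel k n g f ↔ f = interleave g := by
  have h0 (i : Fin k) : interleaveEquiv k (i, 0) = ⟨2 * i, by omega⟩ := Fin.ext (by simp)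
  have h1 (i : Fin k) : interleaveEquiv k (i, 1) = ⟨2 * i + 1, by omega⟩ := Fin.ext (by simp)
  rw [funext_iff, ← (interleaveEquiv k).forall_congr_right, Prod.forall]
  simp only [Fin.forall_fin_two, interleave_interleaveEquiv, h0, h1, fgRel]
  exact forall_congr' fun i => by simp [Fin.ext_iff, add_comm]

/-- The map `g ↦ f_g` is a bijection from `I_{k,n}` onto the set `S` of injections
of the interleaved form, and every `f ∈ S` has `sgn(f) = (-1)^{k(k-1)/2}`. -/
theorem interleaved_injection_bijection_sign (k n : ℕ) :
    (∀ g : Fin k ↪ Fin n, ∃! f : Fin (2 * k) ↪ Fin (2 * n), fgRel k n g ⇑f) ∧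
    (∀ (f : Fin (2 * k) ↪ Fin (2 * n)) (g g' : Fin k ↪ Fin n),
      fgRel k n g ⇑f → fgRel k n g' ⇑f → g = g') ∧
    (∀ (g : Fin k ↪ Fin n) (f : Fin (2 * k) ↪ Fin (2 * n)), fgRel k n g ⇑f →
      (-1 : ℤ) ^ ((univ.filter fun p : Fin (2 * k) × Fin (2 * k) =>
          p.1 < p.2 ∧ f p.2 < f p.1).card) = (-1 : ℤ) ^ (k * (k - 1) / 2)) := by
  refine ⟨fun g => ?_, fun f g g' hg hg' => ?_, fun g f hf => ?_⟩
  · refine ⟨⟨interleave g, g.injective.interleave⟩, (fgRel_iff k n g _).2 rfl, fun f hf => ?_⟩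
    exact DFunLike.coe_injective ((fgRel_iff k n g f).1 hf)
  · have hgg' : interleave g = interleave g' :=
      ((fgRel_iff k n g f).1 hg).symm.trans ((fgRel_iff k n g' f).1 hg')
    exact DFunLike.coe_injective (interleave_injective hgg')
  · change (-1 : ℤ) ^ #(inversions f) = _
    rw [(fgRel_iff k n g f).1 hf, card_inversions_interleave, pow_add, pow_mul, neg_one_sq,
      one_pow, mul_one, Nat.choose_two_right]
end

section
/- For k even, in the free noncommutative algebra, S*_{n,k} = Σ_{S : |S| ≤ k/2} (-1)^{|S|} f̂_S · f̂_S, where f̂_S = Σ_{A ⊇ S, |A| = k/2} m*_A and m*_A = Σ_{σ ∈ S_{k/2}} y_{a_{σ(1)}} ⋯ y_{a_{σ(k/2)}} is the symmetrization of the multilinear word on A = {a_1,…,a_{k/2}}. -/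
/-!
Splitting an injective word of length `2r` into its two halves identifies `S*_{n,2r}` with the sum
of `m*_A · m*_B` over pairs of disjoint `r`-sets `A`, `B`. Expanding `f̂_S · f̂_S` and exchanging the
order of summation, the coefficient of `m*_A · m*_B` on the right-hand side is
`Σ_{S ⊆ A ∩ B} (-1)^{|S|}`, which is `1` if `A ∩ B = ∅` and `0` otherwise.
-/

open Finset

/-- `m*_A`: the symmetrized multilinear word on the `m`-set `A`, i.e. the sum of
all words whose letters are exactly the elements of `A`, each appearing once. -/
noncomputable def mstar (F : Type*) [Field F] (n m : ℕ) (A : Finset (Fin n)) :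
    MonoidAlgebra F (FreeMonoid (Fin n)) :=
  ∑ e ∈ (univ : Finset (Fin m ↪ Fin n)).filter (fun e => univ.image (fun i : Fin m => e i) = A),
    MonoidAlgebra.single (FreeMonoid.ofList (List.ofFn fun i : Fin m => e i)) (1 : F)

/-- `S*_{n,k}`: the sum of all injective words of length `k`. -/
noncomputable def SstarP (F : Type*) [Field F] (n k : ℕ) :
    MonoidAlgebra F (FreeMonoid (Fin n)) :=
  ∑ h : Fin k ↪ Fin n,
    MonoidAlgebra.single (FreeMonoid.ofList (List.ofFn fun i : Fin k => h i)) (1 : F)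

/-- `f̂_S = Σ_{A ⊇ S, |A| = k/2} m*_A`. -/
noncomputable def fhatP (F : Type*) [Field F] (n k : ℕ) (S : Finset (Fin n)) :
    MonoidAlgebra F (FreeMonoid (Fin n)) :=
  ∑ A ∈ ((univ : Finset (Fin n)).powersetCard (k / 2)).filter (fun A => S ⊆ A),
    mstar F n (k / 2) A

section InclusionExclusion

variable {R M α : Type*} [Ring R] [AddCommGroup M] [Module R M] [DecidableEq α]

theorem sum_powerset_neg_one_pow_smul (T : Finset α) (y : M) :
    ∑ S ∈ T.powerset, (-1 : R) ^ #S • y = if T = ∅ then y else 0 := by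
  have hcast : ∑ S ∈ T.powerset, (-1 : R) ^ #S = ((∑ S ∈ T.powerset, (-1 : ℤ) ^ #S : ℤ) : R) := by
    push_cast; rfl
  rw [← sum_smul, hcast, sum_powerset_neg_one_pow_card]
  split_ifs <;> simp

theorem sum_neg_one_pow_smul_sum_supset_sum_supset [Fintype α] (s : Finset (Finset α))
    (x : Finset α → Finset α → M) :
    ∑ S, (-1 : R) ^ #S • ∑ A ∈ s with S ⊆ A, ∑ B ∈ s with S ⊆ B, x A B =
      ∑ A ∈ s, ∑ B ∈ s with Disjoint A B, x A B := by
  calc ∑ S, (-1 : R) ^ #S • ∑ A ∈ s with S ⊆ A, ∑ B ∈ s with S ⊆ B, x A B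
      = ∑ S, ∑ A ∈ s with S ⊆ A, ∑ B ∈ s with S ⊆ B, (-1 : R) ^ #S • x A B := by
        simp only [smul_sum]
    _ = ∑ A ∈ s, ∑ S ∈ A.powerset, ∑ B ∈ s with S ⊆ B, (-1 : R) ^ #S • x A B :=
        sum_comm' fun S A => by simp [and_comm]
    _ = ∑ A ∈ s, ∑ B ∈ s, ∑ S ∈ (A ∩ B).powerset, (-1 : R) ^ #S • x A B :=
        sum_congr rfl fun A _ => sum_comm' fun S B => by
          simp only [mem_powerset, mem_filter, subset_inter_iff]; tauto
    _ = ∑ A ∈ s, ∑ B ∈ s with Disjoint A B, x A B := by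
        simp only [sum_powerset_neg_one_pow_smul, ← disjoint_iff_inter_eq_empty, sum_ite,
          sum_const_zero, add_zero]

end InclusionExclusion

section Words

variable {F : Type*} [Field F] {n : ℕ}

def embWord {m : ℕ} (e : Fin m ↪ Fin n) : FreeMonoid (Fin n) :=
  FreeMonoid.ofList (List.ofFn e)

theorem disjoint_image_univ_iff {m m' : ℕ} (e : Fin m ↪ Fin n) (e' : Fin m' ↪ Fin n) :
    Disjoint (univ.image e) (univ.image e') ↔ Disjoint (Set.range e) (Set.range e') := by
  rw [← disjoint_coe]
  simp only [coe_image, coe_univ, Set.image_univ]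

theorem SstarP_add (m m' : ℕ) :
    SstarP F n (m + m') =
      ∑ p : (Fin m ↪ Fin n) × (Fin m' ↪ Fin n) with Disjoint (univ.image p.1) (univ.image p.2),
        MonoidAlgebra.single (embWord p.1 * embWord p.2) (1 : F) := by
  classical
  rw [sum_subtype (p := fun p => Disjoint (Set.range p.1) (Set.range p.2)) _
    fun p => by simp only [mem_filter, mem_univ, true_and, disjoint_image_univ_iff]]
  refine Fintype.sum_equiv ((Equiv.embeddingCongr finSumFinEquiv (Equiv.refl (Fin n))).symm.trans
    Equiv.sumEmbeddingEquivProdEmbeddingDisjoint) _ _ fun h => ?_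
  -- the two halves of `h` under this equivalence are `h ∘ Fin.castAdd m'` and `h ∘ Fin.natAdd m`
  simp only [embWord, List.ofFn_add, FreeMonoid.ofList_append]
  rfl

theorem mstar_mul_mstar {m m' : ℕ} (A B : Finset (Fin n)) :
    mstar F n m A * mstar F n m' B =
      ∑ e ∈ univ.filter (fun e : Fin m ↪ Fin n => univ.image e = A),
        ∑ e' ∈ univ.filter (fun e' : Fin m' ↪ Fin n => univ.image e' = B),
          MonoidAlgebra.single (embWord e * embWord e') (1 : F) := by
  simp only [mstar, sum_mul_sum, MonoidAlgebra.single_mul_single, one_mul]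
  rfl

theorem sum_mstar_mul_mstar_of_disjoint (m m' : ℕ) :
    ∑ A ∈ powersetCard m univ, ∑ B ∈ powersetCard m' univ with Disjoint A B,
        mstar F n m A * mstar F n m' B =
      ∑ p : (Fin m ↪ Fin n) × (Fin m' ↪ Fin n) with Disjoint (univ.image p.1) (univ.image p.2),
        MonoidAlgebra.single (embWord p.1 * embWord p.2) (1 : F) := by
  have image_mem {k : ℕ} (e : Fin k ↪ Fin n) : univ.image e ∈ powersetCard k univ := by
    rw [mem_powersetCard_univ, card_image_of_injective _ e.injective, card_univ, Fintype.card_fin]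
  calc _ = ∑ A ∈ powersetCard m univ, ∑ B ∈ powersetCard m' univ,
        ∑ e ∈ univ.filter (fun e : Fin m ↪ Fin n => univ.image e = A),
          ∑ e' ∈ univ.filter (fun e' : Fin m' ↪ Fin n => univ.image e' = B),
            if Disjoint (univ.image e) (univ.image e') then
              MonoidAlgebra.single (embWord e * embWord e') (1 : F) else 0 := by
        refine sum_congr rfl fun A _ => ?_
        rw [sum_filter]
        refine sum_congr rfl fun B _ => ?_
        have hcond : ∀ e ∈ univ.filter (fun e : Fin m ↪ Fin n => univ.image e = A),
            ∀ e' ∈ univ.filter (fun e' : Fin m' ↪ Fin n => univ.image e' = B),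
            Disjoint (univ.image e) (univ.image e') ↔ Disjoint A B := fun e he e' he' => by
          rw [(mem_filter.1 he).2, (mem_filter.1 he').2]
        rw [mstar_mul_mstar, sum_congr rfl fun e he => sum_congr rfl fun e' he' =>
          if_congr (hcond e he e' he') rfl rfl]
        simp only [sum_ite_irrel, sum_const_zero]
    _ = ∑ e : Fin m ↪ Fin n, ∑ e' : Fin m' ↪ Fin n,
            if Disjoint (univ.image e) (univ.image e') then
              MonoidAlgebra.single (embWord e * embWord e') (1 : F) else 0 := by
        rw [← sum_fiberwise_of_maps_to (fun e _ => image_mem e)]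
        refine sum_congr rfl fun A _ => ?_
        rw [sum_comm]
        exact sum_congr rfl fun e _ => sum_fiberwise_of_maps_to (fun e' _ => image_mem e') _
    _ = _ := by rw [sum_filter, ← sum_product', univ_product_univ]

end Words

theorem fhatP_eq_zero_of_lt_card (F : Type*) [Field F] {n k : ℕ} {S : Finset (Fin n)}
    (hS : k / 2 < #S) : fhatP F n k S = 0 := by
  refine sum_eq_zero fun A hA => absurd (card_le_card (mem_filter.1 hA).2) ?_
  rw [mem_powersetCard_univ.1 (mem_filter.1 hA).1]
  exact hS.not_ge

theorem Sstar_eq_inclusion_exclusion_general (F : Type*) [Field F] (n k : ℕ)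
    (hk : Even k) :
    SstarP F n k =
      ∑ S ∈ (univ : Finset (Fin n)).powerset.filter (fun S => S.card ≤ k / 2),
        ((-1 : F) ^ S.card) • (fhatP F n k S * fhatP F n k S) := by
  rw [sum_filter_of_ne fun S _ hS => not_lt.1 fun hlt => hS ?_]
  · obtain ⟨r, rfl⟩ := hk
    have hr : (r + r) / 2 = r := by omega
    rw [powerset_univ, SstarP_add, ← sum_mstar_mul_mstar_of_disjoint,
      ← sum_neg_one_pow_smul_sum_supset_sum_supset (R := F)]
    simp only [fhatP, hr, sum_mul_sum]
  · rw [fhatP_eq_zero_of_lt_card F hlt, zero_mul, smul_zero]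

/-- For `k` even, `S*_{n,k} = Σ_{|S| ≤ k/2} (-1)^{|S|} f̂_S · f̂_S` in the free
noncommutative algebra. -/
theorem Sstar_eq_inclusion_exclusion (F : Type*) [Field F] (n k : ℕ)
    (hk : Even k) (hkn : k / 2 ≤ n) :
    SstarP F n k =
      ∑ S ∈ (univ : Finset (Fin n)).powerset.filter (fun S => S.card ≤ k / 2),
        ((-1 : F) ^ S.card) • (fhatP F n k S * fhatP F n k S) :=
  Sstar_eq_inclusion_exclusion_general F n k hk
end
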